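/- arXiv:1304.6233 — 2 statements merged into one kernel-verified Lean document; each statement's English description precedes it below -/
import Mathlib

section
/- The minimum value of rank(Z) + rank(L) over all pairs of square matrices (Z, L) satisfying X = X Z + L X equals rank(X). Moreover, this minimum is attained at (Z, L) = (X† X, 0). -/
/-
Both terms of `X = X Z + L X` have rank at most `rank Z` and `rank L` respectively, and rank is
subadditive, so every feasible pair has `rank X ≤ rank Z + rank L`. Conversely `X (X† X) = X`, and
`X† X` has the rank of `X` because `X = X (X† X)` and `X† X` factor through each other.
-/

open Matrix

/-- The nuclear norm of a real matrix: the sum of its singular values,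
i.e. the sum of the square roots of the eigenvalues of `Aᵀ * A`. -/
noncomputable def nuclearNorm {m n : Type*} [Fintype m] [Fintype n] [DecidableEq n]
    (A : Matrix m n ℝ) : ℝ :=
  ∑ i, Real.sqrt ((show (Aᵀ * A).IsHermitian by
    simpa using Matrix.isHermitian_conjTranspose_mul_self A).eigenvalues i)

/-- `P` is the Moore–Penrose pseudo-inverse of `X`. -/
def IsMoorePenroseInv {m n : Type*} [Fintype m] [Fintype n]
    (X : Matrix m n ℝ) (P : Matrix n m ℝ) : Prop :=
  X * P * X = X ∧ P * X * P = P ∧ (X * P)ᵀ = X * P ∧ (P * X)ᵀ = P * X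

/-- `(U, σ, V)` is a skinny SVD of `X`: `U` and `V` have orthonormal columns,
`σ` lists the (positive) nonzero singular values, `X = U * diagonal σ * Vᵀ`,
and the number of columns of `U` and `V` is `rank X`. -/
def IsSkinnySVD {m n r : ℕ} (X : Matrix (Fin m) (Fin n) ℝ)
    (U : Matrix (Fin m) (Fin r) ℝ) (σ : Fin r → ℝ) (V : Matrix (Fin n) (Fin r) ℝ) : Prop :=
  Uᵀ * U = 1 ∧ Vᵀ * V = 1 ∧ (∀ i, 0 < σ i) ∧
    X = U * Matrix.diagonal σ * Vᵀ ∧ r = X.rank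

namespace Matrix

variable {m n K : Type*} [Fintype n] [Field K]

theorem rank_add_le (A B : Matrix m n K) : (A + B).rank ≤ A.rank + B.rank := by
  rw [rank, mulVecLin_add]
  exact (Submodule.finrank_mono (LinearMap.range_add_le _ _)).trans
    (Submodule.finrank_add_le_finrank_add_finrank _ _)

theorem rank_le_rank_add_rank_of_eq_mul_add_mul [Fintype m] {X : Matrix m n K}
    {Z : Matrix n n K} {L : Matrix m m K} (h : X = X * Z + L * X) :
    X.rank ≤ Z.rank + L.rank :=
  calc X.rank = (X * Z + L * X).rank := congrArg rank h
    _ ≤ (X * Z).rank + (L * X).rank := rank_add_le _ _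
    _ ≤ Z.rank + L.rank := add_le_add (rank_mul_le_right _ _) (rank_mul_le_left _ _)

theorem rank_mul_eq_right_of_mul_mul_eq [Fintype m] {X : Matrix m n K} {P : Matrix n m K}
    (h : X * P * X = X) : (P * X).rank = X.rank :=
  le_antisymm (rank_mul_le_right P X) <|
    calc X.rank = (X * (P * X)).rank := by rw [← Matrix.mul_assoc, h]
      _ ≤ (P * X).rank := rank_mul_le_right _ _

end Matrix

theorem stmt2_general {m n : ℕ} (X : Matrix (Fin m) (Fin n) ℝ)
    (P : Matrix (Fin n) (Fin m) ℝ) (hP : IsMoorePenroseInv X P) :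
    IsLeast {k : ℕ | ∃ (Z : Matrix (Fin n) (Fin n) ℝ) (L : Matrix (Fin m) (Fin m) ℝ),
        X = X * Z + L * X ∧ Z.rank + L.rank = k} X.rank ∧
    X = X * (P * X) + (0 : Matrix (Fin m) (Fin m) ℝ) * X ∧
    (P * X).rank + (0 : Matrix (Fin m) (Fin m) ℝ).rank = X.rank := by
  have hfeasible : X = X * (P * X) + (0 : Matrix (Fin m) (Fin m) ℝ) * X := by
    rw [Matrix.zero_mul, add_zero, ← Matrix.mul_assoc, hP.1]
  have hvalue : (P * X).rank + (0 : Matrix (Fin m) (Fin m) ℝ).rank = X.rank := by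
    rw [rank_zero, add_zero, rank_mul_eq_right_of_mul_mul_eq hP.1]
  refine ⟨⟨⟨P * X, 0, hfeasible, hvalue⟩, ?_⟩, hfeasible, hvalue⟩
  rintro k ⟨Z, L, hZL, rfl⟩
  exact rank_le_rank_add_rank_of_eq_mul_add_mul hZL

/-- The minimum of `rank Z + rank L` subject to `X = X Z + L X` equals `rank X`,
attained at `(Z, L) = (X† X, 0)`. -/
theorem stmt2 {m n : ℕ} (X : Matrix (Fin m) (Fin n) ℝ) (hX : X ≠ 0)
    (P : Matrix (Fin n) (Fin m) ℝ) (hP : IsMoorePenroseInv X P) :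
    IsLeast {k : ℕ | ∃ (Z : Matrix (Fin n) (Fin n) ℝ) (L : Matrix (Fin m) (Fin m) ℝ),
        X = X * Z + L * X ∧ Z.rank + L.rank = k} X.rank ∧
    X = X * (P * X) + (0 : Matrix (Fin m) (Fin m) ℝ) * X ∧
    (P * X).rank + (0 : Matrix (Fin m) (Fin m) ℝ).rank = X.rank :=
  stmt2_general X P hP
end

section
/- Let Ŵ be a matrix of size rank(X) that is block diagonal compatibly with Σ_X (i.e., [Ŵ]_{ij} = 0 whenever [Σ_X]_{ii} ≠ [Σ_X]_{jj}), with both Ŵ and I − Ŵ symmetric positive semi-definite, and suppose Ŵ is not idempotent. Then the pair (Z*, L*) = (V_X Ŵ V_Xᵀ, U_X (I − Ŵ) U_Xᵀ) is an optimal solution to the heuristic LatLRR problem (minimize ‖Z‖_* + ‖L‖_* subject to X = X Z + L X) but is not an optimal solution to the original LatLRR problem (minimize rank(Z) + rank(L) subject to X = X Z + L X). -/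
open Matrix

/-!
Since `Σ_X` commutes with `W`, the pair is feasible. For any feasible `(Z, L)`, conjugating the
constraint by `U_X`, `V_X` and cancelling `Σ_X` gives `I = V_Xᵀ Z V_X + Σ_X⁻¹ (U_Xᵀ L U_X) Σ_X`,
so `rank X = tr (V_Xᵀ Z V_X) + tr (U_Xᵀ L U_X) ≤ ‖Z‖_* + ‖L‖_*`; the candidate attains this bound
because the nuclear norm of a positive semidefinite matrix is its trace.

For ranks, `W + (I - W) = I` makes the ranges of `W` and `I - W` span everything, and when `W` is
not idempotent they share the nonzero range of `W (I - W)`; hence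
`rank W + rank (I - W) > rank X`, which is the value of the feasible pair `(V_X V_Xᵀ, 0)`.
-/

section DotProduct

variable {ι : Type*} [Fintype ι]

lemma Matrix.dotProduct_le_sqrt_mul_sqrt (a b : ι → ℝ) :
    a ⬝ᵥ b ≤ √(a ⬝ᵥ a) * √(b ⬝ᵥ b) := by
  simpa [dotProduct, sq] using Real.sum_mul_le_sqrt_mul_sqrt Finset.univ a b

lemma Matrix.dotProduct_mulVec_self_le {P : Matrix ι ι ℝ} (hPs : P.IsSymm)
    (hPP : IsIdempotentElem P) (x : ι → ℝ) : (P *ᵥ x) ⬝ᵥ (P *ᵥ x) ≤ x ⬝ᵥ x := by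
  have hproj : (P *ᵥ x) ⬝ᵥ (P *ᵥ x) = x ⬝ᵥ (P *ᵥ x) := by
    rw [dotProduct_mulVec, vecMul_mulVec, hPs.eq, hPP.eq, ← mulVec_transpose, hPs.eq,
      dotProduct_comm]
  have hnn : 0 ≤ (x - P *ᵥ x) ⬝ᵥ (x - P *ᵥ x) := dotProduct_star_self_nonneg _
  simp only [sub_dotProduct, dotProduct_sub, dotProduct_comm (P *ᵥ x) x] at hnn
  linarith

end DotProduct

section NuclearNorm

open scoped MatrixOrder

variable {ι κ : Type*} [Fintype ι] [DecidableEq ι] [Fintype κ]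

lemma nuclearNorm_eq_sum_sqrt_eigenvalues (Z : Matrix κ ι ℝ) (hZ : (Zᵀ * Z).IsHermitian) :
    nuclearNorm Z = ∑ i, √(hZ.eigenvalues i) :=
  rfl

lemma Matrix.IsHermitian.trace_cfc {A : Matrix ι ι ℝ} (hA : A.IsHermitian) (f : ℝ → ℝ) :
    (hA.cfc f).trace = ∑ i, f (hA.eigenvalues i) := by
  rw [IsHermitian.cfc, Unitary.conjStarAlgAut_apply, trace_mul_cycle,
    Unitary.coe_star_mul_self, Matrix.one_mul, trace_diagonal]
  simp

lemma nuclearNorm_eq_trace_of_posSemidef {S : Matrix ι ι ℝ} (hS : S.PosSemidef) :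
    nuclearNorm S = S.trace := by
  have hSS : Sᵀ * S = S ^ 2 := by
    rw [← conjTranspose_eq_transpose_of_trivial, hS.1.eq, sq]
  have hsqrt : cfc Real.sqrt (S ^ 2) = S := by
    rw [← cfcₙ_eq_cfc, ← CFC.sqrt_eq_real_sqrt _ (hS.pow 2).nonneg, CFC.sqrt_sq S hS.nonneg]
  unfold nuclearNorm
  simp only [hSS]
  rw [← IsHermitian.trace_cfc, ← IsHermitian.cfc_eq, hsqrt]

lemma Matrix.trace_eq_sum_dotProduct_mulVec (M : Matrix ι ι ℝ)
    (b : OrthonormalBasis ι ℝ (EuclideanSpace ℝ ι)) :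
    M.trace = ∑ i, ⇑(b i) ⬝ᵥ (M *ᵥ ⇑(b i)) := by
  rw [← M.trace_toLin_eq (EuclideanSpace.basisFun ι ℝ).toBasis,
    ← toEuclideanLin_eq_toLin_orthonormal, LinearMap.trace_eq_sum_inner _ b]
  simp [EuclideanSpace.inner_eq_star_dotProduct, dotProduct_comm]

/-- `hA` says that `A` has operator norm at most one: the easy half of the duality between the
nuclear norm and the operator norm. -/
lemma trace_mul_le_nuclearNorm {A : Matrix ι κ ℝ}
    (hA : ∀ x, (Aᵀ *ᵥ x) ⬝ᵥ (Aᵀ *ᵥ x) ≤ x ⬝ᵥ x) (Z : Matrix κ ι ℝ) :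
    (A * Z).trace ≤ nuclearNorm Z := by
  have hZ : (Zᵀ * Z).IsHermitian := by
    simpa using isHermitian_conjTranspose_mul_self Z
  set b := hZ.eigenvectorBasis
  rw [trace_eq_sum_dotProduct_mulVec _ b, nuclearNorm_eq_sum_sqrt_eigenvalues Z hZ]
  refine Finset.sum_le_sum fun i _ => ?_
  have hb : ⇑(b i) ⬝ᵥ ⇑(b i) = 1 := by
    simpa only [EuclideanSpace.inner_eq_star_dotProduct, star_trivial] using b.inner_eq_one i
  have hZb : (Z *ᵥ ⇑(b i)) ⬝ᵥ (Z *ᵥ ⇑(b i)) = hZ.eigenvalues i := by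
    rw [dotProduct_mulVec, ← mulVec_transpose, dotProduct_comm, mulVec_mulVec,
      hZ.mulVec_eigenvectorBasis, dotProduct_smul, hb, smul_eq_mul, mul_one]
  calc ⇑(b i) ⬝ᵥ ((A * Z) *ᵥ ⇑(b i))
      = (Aᵀ *ᵥ ⇑(b i)) ⬝ᵥ (Z *ᵥ ⇑(b i)) := by
        rw [← mulVec_mulVec, dotProduct_mulVec, mulVec_transpose]
    _ ≤ √((Aᵀ *ᵥ ⇑(b i)) ⬝ᵥ (Aᵀ *ᵥ ⇑(b i))) * √((Z *ᵥ ⇑(b i)) ⬝ᵥ (Z *ᵥ ⇑(b i))) :=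
        dotProduct_le_sqrt_mul_sqrt _ _
    _ ≤ √(hZ.eigenvalues i) := by
        rw [hZb]
        refine mul_le_of_le_one_left (Real.sqrt_nonneg _) (Real.sqrt_le_one.mpr ?_)
        exact hb ▸ hA _

lemma trace_transpose_mul_mul_le_nuclearNorm [DecidableEq κ] {V : Matrix ι κ ℝ}
    (hV : Vᵀ * V = 1) (Z : Matrix ι ι ℝ) : (Vᵀ * Z * V).trace ≤ nuclearNorm Z := by
  have hPs : (V * Vᵀ).IsSymm := by simp [IsSymm, transpose_mul]
  have hPP : IsIdempotentElem (V * Vᵀ) := by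
    rw [IsIdempotentElem, Matrix.mul_assoc, ← Matrix.mul_assoc Vᵀ, hV, Matrix.one_mul]
  rw [trace_mul_cycle]
  exact trace_mul_le_nuclearNorm (hPs.eq.symm ▸ dotProduct_mulVec_self_le hPs hPP) Z

lemma nuclearNorm_mul_mul_transpose_of_posSemidef [DecidableEq κ] {V : Matrix ι κ ℝ}
    (hV : Vᵀ * V = 1) {W : Matrix κ κ ℝ} (hW : W.PosSemidef) :
    nuclearNorm (V * W * Vᵀ) = W.trace := by
  have hVWV : (V * W * Vᵀ).PosSemidef := by
    simpa using hW.mul_mul_conjTranspose_same V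
  rw [nuclearNorm_eq_trace_of_posSemidef hVWV, trace_mul_cycle, hV, Matrix.one_mul]

end NuclearNorm

section LatLRR

variable {m n r : Type*} [Fintype m] [Fintype n] [Fintype r] [DecidableEq r]

lemma Matrix.commute_diagonal_of_forall_ne {R : Type*} [CommSemiring R] {d : r → R}
    {W : Matrix r r R} (hW : ∀ i j, d i ≠ d j → W i j = 0) : Commute (diagonal d) W := by
  ext i j
  rw [diagonal_mul, mul_diagonal]
  rcases eq_or_ne (d i) (d j) with h | h
  · rw [h, mul_comm]
  · rw [hW i j h, mul_zero, zero_mul]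

lemma eq_mul_conj_add_conj_mul_of_commute {R : Type*} [CommRing R] {U : Matrix m r R}
    {V : Matrix n r R} (hU : Uᵀ * U = 1) (hV : Vᵀ * V = 1) {D W : Matrix r r R}
    (hDW : Commute D W) :
    U * D * Vᵀ = U * D * Vᵀ * (V * W * Vᵀ) + U * (1 - W) * Uᵀ * (U * D * Vᵀ) := by
  have hZ : U * D * Vᵀ * (V * W * Vᵀ) = U * (D * W) * Vᵀ := by
    simp only [Matrix.mul_assoc, ← Matrix.mul_assoc Vᵀ V, hV, Matrix.one_mul]
  have hL : U * (1 - W) * Uᵀ * (U * D * Vᵀ) = U * ((1 - W) * D) * Vᵀ := by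
    simp only [Matrix.mul_assoc, ← Matrix.mul_assoc Uᵀ U, hU, Matrix.one_mul]
  rw [hZ, hL, ← Matrix.add_mul, ← Matrix.mul_add, hDW.eq, ← Matrix.add_mul, add_sub_cancel,
    Matrix.one_mul]

lemma trace_conj_add_trace_conj_eq_card {K : Type*} [Field K] {U : Matrix m r K}
    {V : Matrix n r K} (hU : Uᵀ * U = 1) (hV : Vᵀ * V = 1) {D : Matrix r r K} (hD : IsUnit D)
    {Z : Matrix n n K} {L : Matrix m m K}
    (hZL : U * D * Vᵀ = U * D * Vᵀ * Z + L * (U * D * Vᵀ)) :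
    (Vᵀ * Z * V).trace + (Uᵀ * L * U).trace = Fintype.card r := by
  have hDZL : D = D * (Vᵀ * Z * V) + Uᵀ * L * U * D := by
    calc D = Uᵀ * (U * D * Vᵀ) * V := by
          simp only [Matrix.mul_assoc, hV, Matrix.mul_one, ← Matrix.mul_assoc Uᵀ U, hU,
            Matrix.one_mul]
      _ = D * (Vᵀ * Z * V) + Uᵀ * L * U * D := by
          nth_rw 1 [hZL]
          simp only [Matrix.mul_add, Matrix.add_mul, Matrix.mul_assoc, hV, Matrix.mul_one,
            ← Matrix.mul_assoc Uᵀ U, hU, Matrix.one_mul]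
  have hDinv : D⁻¹ * D = 1 := nonsing_inv_mul D ((isUnit_iff_isUnit_det D).mp hD)
  have hDinv' : D * D⁻¹ = 1 := mul_nonsing_inv D ((isUnit_iff_isUnit_det D).mp hD)
  calc (Vᵀ * Z * V).trace + (Uᵀ * L * U).trace
      = (D⁻¹ * (D * (Vᵀ * Z * V))).trace + (D⁻¹ * (Uᵀ * L * U * D)).trace := by
        rw [← Matrix.mul_assoc, hDinv, Matrix.one_mul, ← Matrix.mul_assoc, trace_mul_cycle D⁻¹,
          hDinv', Matrix.one_mul]
    _ = (D⁻¹ * D).trace := by rw [← trace_add, ← Matrix.mul_add, ← hDZL]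
    _ = Fintype.card r := by rw [hDinv, trace_one]

lemma Matrix.rank_mul_mul_transpose {K : Type*} [Field K] {V : Matrix n r K} (hV : Vᵀ * V = 1)
    (A : Matrix r r K) : (V * A * Vᵀ).rank = A.rank := by
  refine le_antisymm ((rank_mul_le_left _ _).trans (rank_mul_le_right _ _)) ?_
  calc A.rank = (Vᵀ * (V * A * Vᵀ) * V).rank := by
        simp only [Matrix.mul_assoc, hV, Matrix.mul_one, ← Matrix.mul_assoc Vᵀ V, Matrix.one_mul]
    _ ≤ (V * A * Vᵀ).rank := (rank_mul_le_left _ _).trans (rank_mul_le_right _ _)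

lemma Matrix.card_lt_rank_add_rank_one_sub {K : Type*} [Field K] {W : Matrix r r K}
    (hW : W * W ≠ W) : Fintype.card r < W.rank + (1 - W).rank := by
  set A := LinearMap.range W.mulVecLin
  set B := LinearMap.range (1 - W).mulVecLin
  have hsup : A ⊔ B = ⊤ := by
    refine eq_top_iff.mpr fun v _ => ?_
    have hv : W *ᵥ v + (1 - W) *ᵥ v = v := by simp [sub_mulVec]
    exact hv ▸ Submodule.add_mem_sup ⟨v, rfl⟩ ⟨v, rfl⟩
  have hinf : LinearMap.range (W * (1 - W)).mulVecLin ≤ A ⊓ B := by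
    refine le_inf ?_ ?_
    · rw [mulVecLin_mul]
      exact LinearMap.range_comp_le_range _ _
    · rw [show W * (1 - W) = (1 - W) * W by rw [mul_sub, sub_mul, mul_one, one_mul],
        mulVecLin_mul]
      exact LinearMap.range_comp_le_range _ _
  have hne : LinearMap.range (W * (1 - W)).mulVecLin ≠ ⊥ := by
    rw [Ne, LinearMap.range_eq_bot, ← toLin'_apply', LinearEquiv.map_eq_zero_iff,
      mul_sub, mul_one, sub_eq_zero]
    exact hW.symm
  have hdim := Submodule.finrank_sup_add_finrank_inf_eq A B
  rw [hsup, finrank_top, Module.finrank_fintype_fun_eq_card] at hdim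
  have hpos : Module.finrank K ↥(A ⊓ B) ≠ 0 :=
    fun h => ne_bot_of_le_ne_bot hne hinf (Submodule.finrank_eq_zero.mp h)
  change Fintype.card r < Module.finrank K A + Module.finrank K B
  omega

end LatLRR

theorem stmt16_general {m n r : ℕ} (X : Matrix (Fin m) (Fin n) ℝ)
    (UX : Matrix (Fin m) (Fin r) ℝ) (σX : Fin r → ℝ) (VX : Matrix (Fin n) (Fin r) ℝ)
    (hsvd : IsSkinnySVD X UX σX VX)
    (W : Matrix (Fin r) (Fin r) ℝ)
    (hblock : ∀ i j, σX i ≠ σX j → W i j = 0)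
    (hpsd : W.PosSemidef) (hpsd' : (1 - W).PosSemidef)
    (hnid : W * W ≠ W) :
    (X = X * (VX * W * VXᵀ) + (UX * (1 - W) * UXᵀ) * X ∧
      ∀ (Z : Matrix (Fin n) (Fin n) ℝ) (L : Matrix (Fin m) (Fin m) ℝ),
        X = X * Z + L * X →
          nuclearNorm (VX * W * VXᵀ) + nuclearNorm (UX * (1 - W) * UXᵀ)
            ≤ nuclearNorm Z + nuclearNorm L) ∧
    ¬ (∀ (Z : Matrix (Fin n) (Fin n) ℝ) (L : Matrix (Fin m) (Fin m) ℝ),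
        X = X * Z + L * X →
          (VX * W * VXᵀ).rank + (UX * (1 - W) * UXᵀ).rank ≤ Z.rank + L.rank) := by
  obtain ⟨hU, hV, hσ, rfl, -⟩ := hsvd
  have hD : IsUnit (diagonal σX) :=
    isUnit_diagonal.mpr (Pi.isUnit_iff.mpr fun i => (hσ i).ne'.isUnit)
  refine ⟨⟨eq_mul_conj_add_conj_mul_of_commute hU hV (commute_diagonal_of_forall_ne hblock),
    fun Z L hZL => ?_⟩, fun hopt => ?_⟩
  · calc nuclearNorm (VX * W * VXᵀ) + nuclearNorm (UX * (1 - W) * UXᵀ)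
        = Fintype.card (Fin r) := by
          rw [nuclearNorm_mul_mul_transpose_of_posSemidef hV hpsd,
            nuclearNorm_mul_mul_transpose_of_posSemidef hU hpsd', ← trace_add, add_sub_cancel,
            trace_one]
      _ = (VXᵀ * Z * VX).trace + (UXᵀ * L * UX).trace :=
          (trace_conj_add_trace_conj_eq_card hU hV hD hZL).symm
      _ ≤ nuclearNorm Z + nuclearNorm L :=
          add_le_add (trace_transpose_mul_mul_le_nuclearNorm hV Z)
            (trace_transpose_mul_mul_le_nuclearNorm hU L)
  · -- `W = 1` gives the feasible pair `(V_X V_Xᵀ, 0)`, of rank value `rank X`.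
    have hrank :=
      hopt _ _ (eq_mul_conj_add_conj_mul_of_commute hU hV (Commute.one_right (diagonal σX)))
    rw [rank_mul_mul_transpose hV, rank_mul_mul_transpose hU, rank_mul_mul_transpose hV,
      rank_mul_mul_transpose hU, sub_self, rank_zero, rank_one, add_zero] at hrank
    exact (card_lt_rank_add_rank_one_sub hnid).not_ge hrank

/-- If `Ŵ` is block diagonal compatibly with `Σ_X`, both `Ŵ` and `I − Ŵ` are
symmetric positive semi-definite, and `Ŵ` is not idempotent, then
`(V_X Ŵ V_Xᵀ, U_X (I − Ŵ) U_Xᵀ)` is optimal for the heuristic LatLRR problem but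
not for the original (rank) LatLRR problem. -/
theorem stmt16 {m n r : ℕ} (X : Matrix (Fin m) (Fin n) ℝ) (hX : X ≠ 0)
    (UX : Matrix (Fin m) (Fin r) ℝ) (σX : Fin r → ℝ) (VX : Matrix (Fin n) (Fin r) ℝ)
    (hsvd : IsSkinnySVD X UX σX VX)
    (W : Matrix (Fin r) (Fin r) ℝ)
    (hblock : ∀ i j, σX i ≠ σX j → W i j = 0)
    (hpsd : W.PosSemidef) (hpsd' : (1 - W).PosSemidef)
    (hnid : W * W ≠ W) :
    (X = X * (VX * W * VXᵀ) + (UX * (1 - W) * UXᵀ) * X ∧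
      ∀ (Z : Matrix (Fin n) (Fin n) ℝ) (L : Matrix (Fin m) (Fin m) ℝ),
        X = X * Z + L * X →
          nuclearNorm (VX * W * VXᵀ) + nuclearNorm (UX * (1 - W) * UXᵀ)
            ≤ nuclearNorm Z + nuclearNorm L) ∧
    ¬ (∀ (Z : Matrix (Fin n) (Fin n) ℝ) (L : Matrix (Fin m) (Fin m) ℝ),
        X = X * Z + L * X →
          (VX * W * VXᵀ).rank + (UX * (1 - W) * UXᵀ).rank ≤ Z.rank + L.rank) :=
  stmt16_general X UX σX VX hsvd W hblock hpsd hpsd' hnid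
end
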